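/- The map E ↦ E^⋆ := ⋂{J ∈ 𝒮 : E ⊆ J}, defined on nonzero fractional ideals of D, is a star operation on D; that is, for every nonzero z ∈ K and all nonzero fractional ideals E, F of D: (zD)^⋆ = zD, (zE)^⋆ = z(E^⋆), E ⊆ F implies E^⋆ ⊆ F^⋆, E ⊆ E^⋆, and (E^⋆)^⋆ = E^⋆. -/

import Mathlib

open MvPolynomial FractionalIdeal

noncomputable section

variable (k : Type*) [Field k]

/-- The ideal `N = (X_1, X_2, ...)` of `R = k[X_1, X_2, ...]` generated by all the
indeterminates. -/
def bigN : Ideal (MvPolynomial ℕ k) := Ideal.span (Set.range MvPolynomial.X)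

theorem bigN_eq_ker : bigN k = RingHom.ker (constantCoeff (σ := ℕ) (R := k)) := by
  ext p
  rw [bigN, ← Set.image_univ, mem_ideal_span_X_image, RingHom.mem_ker]
  constructor
  · intro h
    rw [constantCoeff_eq]
    by_contra hc
    obtain ⟨i, _, hi⟩ := h 0 (mem_support_iff.mpr hc)
    simp at hi
  · intro h m hm
    rw [constantCoeff_eq] at h
    have hm0 : m ≠ 0 := by rintro rfl; exact mem_support_iff.mp hm h
    obtain ⟨i, hi⟩ := Finsupp.ne_iff.mp hm0
    exact ⟨i, trivial, by simpa using hi⟩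

instance : (bigN k).IsMaximal := by
  rw [bigN_eq_ker]
  exact RingHom.ker_isMaximal_of_surjective _ (fun a => ⟨C a, by simp⟩)

/-- `D`, the localization of `k[X_1, X_2, ...]` at the maximal ideal `N`. -/
abbrev bigD := Localization.AtPrime (bigN k)

/-- `K`, the fraction field of `D`. -/
abbrev bigK := FractionRing (bigD k)

/-- `M`, the maximal ideal of the local domain `D`. -/
def bigM : Ideal (bigD k) := IsLocalRing.maximalIdeal (bigD k)

open Pointwise

attribute [-instance] instAlgebraAtPrimeFractionRing

/-- The maximal ideal `M` of `D`, viewed as a fractional ideal of `D`. -/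
def bigMF : FractionalIdeal (nonZeroDivisors (bigD k)) (bigK k) :=
  ((bigM k : Ideal (bigD k)) : FractionalIdeal (nonZeroDivisors (bigD k)) (bigK k))

/-- The `b`-operation: `E^b = ⋂ EV`, the intersection over all valuation overrings `V` of `D`
of the `V`-submodule of `K` generated by `E` (viewed as a `D`-submodule of `K`). -/
def bOp (E : Submodule (bigD k) (bigK k)) : Submodule (bigD k) (bigK k) :=
  sInf {J | ∃ V : ValuationSubring (bigK k),
    (∀ d : bigD k, algebraMap (bigD k) (bigK k) d ∈ V) ∧
    J = Submodule.span (bigD k) ((E : Set (bigK k)) * (V : Set (bigK k)))}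

/-- The set `𝒮` of all fractional ideals of `D` of the form `xF^b` (with `x ∈ K` nonzero and
`F` a finitely generated nonzero fractional ideal of `D`) or `yM` (with `y ∈ K` nonzero),
viewed as `D`-submodules of `K`. -/
def Sset : Set (Submodule (bigD k) (bigK k)) :=
  {J | (∃ x : bigK k, x ≠ 0 ∧
          ∃ F : FractionalIdeal (nonZeroDivisors (bigD k)) (bigK k), F ≠ 0 ∧
            (F : Submodule (bigD k) (bigK k)).FG ∧
            J = Submodule.span (bigD k) {x} * bOp k (F : Submodule (bigD k) (bigK k))) ∨
       (∃ y : bigK k, y ≠ 0 ∧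
          J = Submodule.span (bigD k) {y} * (bigMF k : Submodule (bigD k) (bigK k)))}

/-- The operation `E^⋆ := ⋂ {J ∈ 𝒮 : E ⊆ J}`. -/
def starS (E : Submodule (bigD k) (bigK k)) : Submodule (bigD k) (bigK k) :=
  sInf {J | J ∈ Sset k ∧ E ≤ J}

/-!
The only non-formal point is that `𝒮` contains every principal fractional ideal `zD`: taking
`F = D`, this needs `D^b = D`, which holds because `D` is integrally closed and an element of `K`
lying in every valuation overring of `D` is integral over `D`. Since `z • xF^b = (zx)F^b` and
`z • yM = (zy)M`, the family `𝒮` is stable under multiplication by nonzero elements of `K`, so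
`⋆` commutes with it; the remaining axioms hold for `E ↦ ⋂ {J ∈ 𝒮 : E ⊆ J}` whatever `𝒮` is.
-/

theorem isIntegral_of_forall_mem_valuationSubring {R K : Type*} [CommRing R] [Field K]
    [Algebra R K] {x : K}
    (hx : ∀ V : ValuationSubring K, (∀ r : R, algebraMap R K r ∈ V) → x ∈ V) :
    IsIntegral R x := by
  by_contra hnot
  obtain ⟨V, hV, hxV⟩ :=
    Subring.exists_le_valuationSubring_of_isIntegrallyClosedIn
      (R := (integralClosure R K).toSubring) hnot
  exact hxV (hx V fun r => hV ((integralClosure R K).algebraMap_mem r))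

theorem mem_of_mem_span_one_mul_valuationSubring {R K : Type*} [CommRing R] [Field K]
    [Algebra R K] {V : ValuationSubring K} (hV : ∀ r : R, algebraMap R K r ∈ V) {x : K}
    (hx : x ∈ Submodule.span R (((1 : Submodule R K) : Set K) * (V : Set K))) : x ∈ V := by
  induction hx using Submodule.span_induction with
  | mem y hy =>
    obtain ⟨a, ha, b, hb, rfl⟩ := hy
    obtain ⟨r, rfl⟩ := Submodule.mem_one.mp ha
    exact mul_mem (hV r) hb
  | zero => exact V.zero_mem
  | add _ _ _ _ hy hz => exact add_mem hy hz
  | smul r y _ hy =>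
    rw [Algebra.smul_def]
    exact mul_mem (hV r) hy

instance : IsIntegrallyClosed (bigD k) :=
  isIntegrallyClosed_of_isLocalization _ _ (bigN k).primeCompl_le_nonZeroDivisors

theorem bOp_one : bOp k 1 = 1 := by
  refine le_antisymm (fun x hx => ?_) (le_sInf ?_)
  · have hx_int : IsIntegral (bigD k) x :=
      isIntegral_of_forall_mem_valuationSubring fun V hV =>
        mem_of_mem_span_one_mul_valuationSubring hV (Submodule.mem_sInf.mp hx _ ⟨V, hV, rfl⟩)
    exact Submodule.mem_one.mpr (IsIntegrallyClosed.isIntegral_iff.mp hx_int)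
  · rintro J ⟨V, -, rfl⟩
    rw [Submodule.one_le]
    exact Submodule.subset_span
      ⟨1, Submodule.mem_one.mpr ⟨1, map_one _⟩, 1, V.one_mem, one_mul 1⟩

theorem smul_mem_Sset {z : bigK k} (hz : z ≠ 0) {J : Submodule (bigD k) (bigK k)}
    (hJ : J ∈ Sset k) : z • J ∈ Sset k := by
  simp only [Sset, Submodule.span_singleton_mul, Set.mem_ofPred_eq] at hJ ⊢
  obtain ⟨x, hx, F, hF, hFG, rfl⟩ | ⟨y, hy, rfl⟩ := hJ
  · exact Or.inl ⟨z * x, mul_ne_zero hz hx, F, hF, hFG, smul_smul z x _⟩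
  · exact Or.inr ⟨z * y, mul_ne_zero hz hy, smul_smul z y _⟩

theorem span_singleton_mem_Sset {z : bigK k} (hz : z ≠ 0) :
    Submodule.span (bigD k) {z} ∈ Sset k := by
  refine Or.inl ⟨z, hz, 1, one_ne_zero, ?_, ?_⟩
  · rw [FractionalIdeal.coe_one, Submodule.one_eq_span]
    exact Submodule.fg_span_singleton 1
  · rw [FractionalIdeal.coe_one, bOp_one, mul_one]

theorem le_starS (E : Submodule (bigD k) (bigK k)) : E ≤ starS k E :=
  le_sInf fun _ hJ => hJ.2

theorem starS_le {E J : Submodule (bigD k) (bigK k)} (hJ : J ∈ Sset k) (hEJ : E ≤ J) :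
    starS k E ≤ J :=
  sInf_le ⟨hJ, hEJ⟩

theorem starS_mono {E F : Submodule (bigD k) (bigK k)} (hEF : E ≤ F) : starS k E ≤ starS k F :=
  le_sInf fun _ hJ => starS_le k hJ.1 (hEF.trans hJ.2)

theorem starS_eq_self_of_mem {J : Submodule (bigD k) (bigK k)} (hJ : J ∈ Sset k) :
    starS k J = J :=
  le_antisymm (starS_le k hJ le_rfl) (le_starS k J)

theorem starS_starS (E : Submodule (bigD k) (bigK k)) : starS k (starS k E) = starS k E :=
  le_antisymm (le_sInf fun _ hJ => starS_le k hJ.1 (starS_le k hJ.1 hJ.2)) (le_starS k _)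

theorem smul_starS_le {z : bigK k} (hz : z ≠ 0) (E : Submodule (bigD k) (bigK k)) :
    z • starS k E ≤ starS k (z • E) := by
  refine le_sInf fun J ⟨hJ, hEJ⟩ => ?_
  have hE : E ≤ z⁻¹ • J := by
    simpa only [smul_smul, inv_mul_cancel₀ hz, one_smul] using smul_mono_right z⁻¹ hEJ
  simpa only [smul_smul, mul_inv_cancel₀ hz, one_smul] using
    smul_mono_right z (starS_le k (smul_mem_Sset k (inv_ne_zero hz) hJ) hE)

theorem starS_smul {z : bigK k} (hz : z ≠ 0) (E : Submodule (bigD k) (bigK k)) :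
    starS k (z • E) = z • starS k E := by
  refine le_antisymm ?_ (smul_starS_le k hz E)
  calc starS k (z • E) = z • z⁻¹ • starS k (z • E) := by
        rw [smul_smul, mul_inv_cancel₀ hz, one_smul]
    _ ≤ z • starS k (z⁻¹ • z • E) :=
        smul_mono_right z (smul_starS_le k (inv_ne_zero hz) _)
    _ = z • starS k E := by rw [smul_smul, inv_mul_cancel₀ hz, one_smul]

/-- The map `E ↦ E^⋆ = ⋂ {J ∈ 𝒮 : E ⊆ J}` is a star operation on `D`. -/
theorem starS_is_star_operation :
    -- `(zD)^⋆ = zD`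
    (∀ z : bigK k, z ≠ 0 →
      starS k ((spanSingleton (nonZeroDivisors (bigD k)) z :
          FractionalIdeal (nonZeroDivisors (bigD k)) (bigK k)) : Submodule (bigD k) (bigK k)) =
        ((spanSingleton (nonZeroDivisors (bigD k)) z :
          FractionalIdeal (nonZeroDivisors (bigD k)) (bigK k)) :
            Submodule (bigD k) (bigK k))) ∧
    -- `(zE)^⋆ = z(E^⋆)`
    (∀ z : bigK k, z ≠ 0 →
      ∀ E : FractionalIdeal (nonZeroDivisors (bigD k)) (bigK k), E ≠ 0 →
        starS k ((spanSingleton (nonZeroDivisors (bigD k)) z * E :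
            FractionalIdeal (nonZeroDivisors (bigD k)) (bigK k)) :
              Submodule (bigD k) (bigK k)) =
          Submodule.span (bigD k) {z} * starS k (E : Submodule (bigD k) (bigK k))) ∧
    -- `E ⊆ F → E^⋆ ⊆ F^⋆`
    (∀ E F : FractionalIdeal (nonZeroDivisors (bigD k)) (bigK k), E ≠ 0 → F ≠ 0 → E ≤ F →
      starS k (E : Submodule (bigD k) (bigK k)) ≤ starS k (F : Submodule (bigD k) (bigK k))) ∧
    -- `E ⊆ E^⋆` and `(E^⋆)^⋆ = E^⋆`
    (∀ E : FractionalIdeal (nonZeroDivisors (bigD k)) (bigK k), E ≠ 0 →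
      (E : Submodule (bigD k) (bigK k)) ≤ starS k (E : Submodule (bigD k) (bigK k)) ∧
        starS k (starS k (E : Submodule (bigD k) (bigK k))) =
          starS k (E : Submodule (bigD k) (bigK k))) := by
  refine ⟨fun z hz => ?_, fun z hz E _ => ?_, fun E F _ _ hEF => ?_, fun E _ => ?_⟩
  · rw [coe_spanSingleton]
    exact starS_eq_self_of_mem k (span_singleton_mem_Sset k hz)
  · rw [FractionalIdeal.coe_mul, coe_spanSingleton, Submodule.span_singleton_mul,
      Submodule.span_singleton_mul, starS_smul k hz]
  · exact starS_mono k (coe_le_coe.mpr hEF)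
  · exact ⟨le_starS k _, starS_starS k _⟩
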